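/- For every φ ∈ (0, π/2) and X, T, ρ ∈ ℝ: (i) |A(x,t; φ, X, T, ρ)| ≤ 1 + 2 sin φ for all (x,t) ∈ ℝ × ℝ, and (ii) at the peak point one has the exact value A(X, T; φ, X, T, ρ) = (1 + 2 sin φ) e^{2iT + iρ}; in particular the maximal amplitude of the breather over the unit background equals 1 + 2 sin φ. -/

import Mathlib

open Complex

/-- Wave number `K(φ) = 2 cos φ`. -/
noncomputable def Kfreq (φ : ℝ) : ℝ := 2 * Real.cos φ

/-- Growth rate `Σ(φ) = 2 sin(2φ)`. -/
noncomputable def Sfreq (φ : ℝ) : ℝ := 2 * Real.sin (2 * φ)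

/-- The Akhmediev one-breather `A(x,t; φ, X, T, ρ)`. -/
noncomputable def akhmediev (φ X T ρ : ℝ) (x t : ℝ) : ℂ :=
  Complex.exp (2 * (t : ℂ) * Complex.I + (ρ : ℂ) * Complex.I) *
    (Complex.cosh ((Sfreq φ * (t - T) : ℝ) + 2 * (φ : ℂ) * Complex.I)
      + (Real.sin φ : ℂ) * (Real.cos (Kfreq φ * (x - X)) : ℂ)) /
    (Complex.cosh ((Sfreq φ * (t - T) : ℝ))
      - (Real.sin φ : ℂ) * (Real.cos (Kfreq φ * (x - X)) : ℂ))

/-!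
Write `s = sin φ`, `y = Σ (t - T)`, `k = cos (K (x - X))` and `C = cosh y ≥ 1`. The phase factor has
modulus one, the denominator `C - s k` is a nonnegative real, and the numerator is
`(C cos 2φ + s k) + i sinh y sin 2φ`. With `cos 2φ = 1 - 2s²` and `sin² 2φ = 4s²(1 - s²)` the bound
`|numerator|² ≤ (1 + 2s)² (C - s k)²` becomes a polynomial inequality whose gap factors as
`4s(1 + s)[(C - k)(C - s k) + s(1 - s)(1 - k²)]`, visibly nonnegative. At the peak `y = 0` and
`k = 1`, where `cos 2φ + s = (1 + 2s)(1 - s)`.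
-/

lemma Complex.cosh_ofReal_add_ofReal_mul_I (y θ : ℝ) :
    cosh ((y : ℂ) + θ * I) = ((Real.cosh y * Real.cos θ : ℝ) : ℂ)
      + ((Real.sinh y * Real.sin θ : ℝ) : ℂ) * I := by
  rw [cosh_add, cosh_mul_I, sinh_mul_I]
  push_cast
  ring

lemma mul_le_of_abs_le_one {s k C : ℝ} (hs : |s| ≤ 1) (hk : |k| ≤ 1) (hC : 1 ≤ C) : s * k ≤ C :=
  calc s * k ≤ |s| * |k| := (le_abs_self _).trans_eq (abs_mul s k)
    _ ≤ 1 := mul_le_one₀ hs (abs_nonneg k) hk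
    _ ≤ C := hC

lemma breather_numerator_sq_le {s C k : ℝ} (hs0 : 0 ≤ s) (hs1 : s ≤ 1) (hC : 1 ≤ C)
    (hk : |k| ≤ 1) :
    (C * (1 - 2 * s ^ 2) + s * k) ^ 2 + (C ^ 2 - 1) * (4 * s ^ 2 * (1 - s ^ 2))
      ≤ ((1 + 2 * s) * (C - s * k)) ^ 2 := by
  have hgap : ((1 + 2 * s) * (C - s * k)) ^ 2
      - ((C * (1 - 2 * s ^ 2) + s * k) ^ 2 + (C ^ 2 - 1) * (4 * s ^ 2 * (1 - s ^ 2)))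
      = 4 * s * (1 + s) * ((C - k) * (C - s * k) + s * (1 - s) * (1 - k ^ 2)) := by
    ring
  have hsk : s * k ≤ C := mul_le_of_abs_le_one (abs_le.mpr ⟨by linarith, hs1⟩) hk hC
  have hbracket : 0 ≤ (C - k) * (C - s * k) + s * (1 - s) * (1 - k ^ 2) :=
    add_nonneg (mul_nonneg (by linarith [(abs_le.mp hk).2]) (by linarith))
      (mul_nonneg (mul_nonneg hs0 (by linarith))
        (sub_nonneg.mpr ((sq_le_one_iff_abs_le_one k).mpr hk)))
  have hfactor : 0 ≤ 4 * s * (1 + s) := mul_nonneg (by linarith) (by linarith)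
  linarith [mul_nonneg hfactor hbracket]

lemma norm_breather_numerator_le {φ : ℝ} (hφ : 0 ≤ Real.sin φ) (y : ℝ) {k : ℝ} (hk : |k| ≤ 1) :
    ‖cosh ((y : ℂ) + 2 * (φ : ℂ) * I) + (Real.sin φ : ℂ) * (k : ℂ)‖
      ≤ (1 + 2 * Real.sin φ) * (Real.cosh y - Real.sin φ * k) := by
  have hs1 : Real.sin φ ≤ 1 := Real.sin_le_one φ
  have hnum : cosh ((y : ℂ) + 2 * (φ : ℂ) * I) + (Real.sin φ : ℂ) * (k : ℂ)
      = ((Real.cosh y * Real.cos (2 * φ) + Real.sin φ * k : ℝ) : ℂ)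
        + ((Real.sinh y * Real.sin (2 * φ) : ℝ) : ℂ) * I := by
    rw [show 2 * (φ : ℂ) * I = ((2 * φ : ℝ) : ℂ) * I by push_cast; ring,
      Complex.cosh_ofReal_add_ofReal_mul_I]
    push_cast
    ring
  have hsin_sq : (Real.sinh y * Real.sin (2 * φ)) ^ 2
      = (Real.cosh y ^ 2 - 1) * (4 * Real.sin φ ^ 2 * (1 - Real.sin φ ^ 2)) := by
    rw [mul_pow, Real.sinh_sq, Real.sin_two_mul, ← Real.cos_sq']
    ring
  have hden : Real.sin φ * k ≤ Real.cosh y :=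
    mul_le_of_abs_le_one (abs_le.mpr ⟨by linarith, hs1⟩) hk (Real.one_le_cosh y)
  rw [hnum, norm_add_mul_I, Real.sqrt_le_iff, hsin_sq, Real.cos_two_mul_eq_one_sub]
  exact ⟨mul_nonneg (by linarith) (sub_nonneg.mpr hden),
    breather_numerator_sq_le hφ hs1 (Real.one_le_cosh y) hk⟩

lemma norm_akhmediev (φ X T ρ x t : ℝ) :
    ‖akhmediev φ X T ρ x t‖
      = ‖cosh ((Sfreq φ * (t - T) : ℝ) + 2 * (φ : ℂ) * I)
          + (Real.sin φ : ℂ) * (Real.cos (Kfreq φ * (x - X)) : ℂ)‖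
        / |Real.cosh (Sfreq φ * (t - T)) - Real.sin φ * Real.cos (Kfreq φ * (x - X))| := by
  rw [akhmediev, norm_div, norm_mul,
    show 2 * (t : ℂ) * I + (ρ : ℂ) * I = ((2 * t + ρ : ℝ) : ℂ) * I by push_cast; ring,
    norm_exp_ofReal_mul_I, one_mul, ← Real.norm_eq_abs, ← Complex.norm_real]
  push_cast
  rfl

/-- (i) `|A(x,t)| ≤ 1 + 2 sin φ` for all `(x,t)`, and (ii) at the peak point
one has the exact value `A(X,T) = (1 + 2 sin φ) e^{2iT + iρ}`; in particular the maximal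
amplitude of the breather over the unit background equals `1 + 2 sin φ`. -/
theorem akhmediev_max_amplitude (φ X T ρ : ℝ) (hφ0 : 0 < φ) (hφ1 : φ < Real.pi / 2) :
    (∀ x t : ℝ, ‖akhmediev φ X T ρ x t‖ ≤ 1 + 2 * Real.sin φ)
    ∧ akhmediev φ X T ρ X T
        = ((1 + 2 * Real.sin φ : ℝ) : ℂ) * Complex.exp (2 * (T : ℂ) * Complex.I + (ρ : ℂ) * Complex.I) := by
  have hs0 : 0 < Real.sin φ := Real.sin_pos_of_pos_of_lt_pi hφ0 (by linarith [Real.pi_pos])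
  have hs1 : Real.sin φ < 1 :=
    (Real.sin_lt_sin_of_lt_of_le_pi_div_two (by linarith) le_rfl hφ1).trans_eq Real.sin_pi_div_two
  refine ⟨fun x t => ?_, ?_⟩
  · have hcos : |Real.cos (Kfreq φ * (x - X))| ≤ 1 := Real.abs_cos_le_one _
    have hden : 0 ≤ Real.cosh (Sfreq φ * (t - T)) - Real.sin φ * Real.cos (Kfreq φ * (x - X)) :=
      sub_nonneg.mpr (mul_le_of_abs_le_one (abs_le.mpr ⟨by linarith, hs1.le⟩) hcos
        (Real.one_le_cosh _))
    rw [norm_akhmediev, abs_of_nonneg hden]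
    exact div_le_of_le_mul₀ hden (by linarith) (norm_breather_numerator_le hs0.le _ hcos)
  · have hne : (1 : ℂ) - Real.sin φ ≠ 0 := by exact_mod_cast (sub_pos.mpr hs1).ne'
    simp only [akhmediev, sub_self, mul_zero, ofReal_zero, zero_add, cosh_zero, Real.cos_zero,
      ofReal_one, mul_one, cosh_mul_I, ← ofReal_ofNat, ← ofReal_mul, ← ofReal_cos,
      Real.cos_two_mul_eq_one_sub]
    field_simp
    push_cast
    ring
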